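/- arXiv:2511.22132 — 2 statements merged into one kernel-verified Lean document; each statement's English description precedes it below -/
import Mathlib

section
/- Let P(ρ) = (a/(γ-1))·ρ^γ with a > 0, γ > 1. Fix 0 < b₁ ≤ b₂. Then there is a constant C > 0, depending only on a, γ, b₁, b₂, such that for all r ∈ [b₁, b₂] and all ρ ≥ 0 with ρ ∉ [b₁/2, 2b₂], one has (1/C)·(1 + ρ^γ) ≤ P(ρ) − P(r) − P'(r)(ρ − r) ≤ C·(1 + ρ^γ). In particular P(ρ) − P(r) − P'(r)(ρ−r) > 0 on this residual set. -/
open Real Set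

/-- Gradient inequality for the convex function `x ↦ x^γ`. -/
private lemma grad_ineq {γ : ℝ} (hγ : 1 < γ) {x y : ℝ} (hx : 0 ≤ x) (hy : 0 < y) :
    y ^ γ + γ * y ^ (γ - 1) * (x - y) ≤ x ^ γ := by
  have hs : -1 ≤ x / y - 1 := by
    have : 0 ≤ x / y := div_nonneg hx hy.le
    linarith
  have hB := one_add_mul_self_le_rpow_one_add hs hγ.le
  rw [show 1 + (x / y - 1) = x / y by ring, Real.div_rpow hx hy.le] at hB
  have hyγ : (0:ℝ) < y ^ γ := Real.rpow_pos_of_pos hy γ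
  have h2 : y ^ (γ - 1) = y ^ γ / y := Real.rpow_sub_one hy.ne' γ
  calc y ^ γ + γ * y ^ (γ - 1) * (x - y)
      = y ^ γ * (1 + γ * (x / y - 1)) := by rw [h2]; field_simp
    _ ≤ y ^ γ * (x ^ γ / y ^ γ) := mul_le_mul_of_nonneg_left hB hyγ.le
    _ = x ^ γ := by field_simp

/-- `t ↦ γ t^(γ-1) - (γ-1) t^γ` is monotone on `[0,1]`. -/
private lemma aux_mono {γ : ℝ} (hγ : 1 < γ) :
    MonotoneOn (fun t : ℝ => γ * t ^ (γ - 1) - (γ - 1) * t ^ γ) (Set.Icc 0 1) := by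
  have hc : ContinuousOn (fun t : ℝ => γ * t ^ (γ - 1) - (γ - 1) * t ^ γ) (Set.Icc 0 1) := by
    apply ContinuousOn.sub
    · exact continuousOn_const.mul (fun x _ =>
        (Real.continuousAt_rpow_const x (γ - 1) (Or.inr (by linarith))).continuousWithinAt)
    · exact continuousOn_const.mul (fun x _ =>
        (Real.continuousAt_rpow_const x γ (Or.inr (by linarith))).continuousWithinAt)
  have hd : ∀ x ∈ Set.Ioo (0:ℝ) 1,
      HasDerivAt (fun t : ℝ => γ * t ^ (γ - 1) - (γ - 1) * t ^ γ)
        (γ * ((γ - 1) * x ^ (γ - 1 - 1)) - (γ - 1) * (γ * x ^ (γ - 1))) x := by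
    intro x hx
    exact ((Real.hasDerivAt_rpow_const (Or.inl hx.1.ne')).const_mul γ).sub
      ((Real.hasDerivAt_rpow_const (Or.inl hx.1.ne')).const_mul (γ - 1))
  apply monotoneOn_of_deriv_nonneg (convex_Icc 0 1) hc
  · intro x hx
    rw [interior_Icc] at hx
    exact (hd x hx).differentiableAt.differentiableWithinAt
  · intro x hx
    rw [interior_Icc] at hx
    rw [(hd x hx).deriv]
    have h1 : x ^ (γ - 1) ≤ x ^ (γ - 1 - 1) :=
      Real.rpow_le_rpow_of_exponent_ge hx.1 hx.2.le (by linarith)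
    nlinarith [mul_nonneg (mul_nonneg (by linarith : (0:ℝ) ≤ γ)
      (by linarith : (0:ℝ) ≤ γ - 1)) (sub_nonneg.2 h1)]

/-- Coercivity estimate on the far side `ρ ≥ 2r`. -/
private lemma key_two {γ : ℝ} (hγ : 1 < γ) {r ρ : ℝ} (hr : 0 < r) (hrρ : 2 * r ≤ ρ) :
    γ * ρ * r ^ (γ - 1) - (γ - 1) * r ^ γ ≤ (γ + 1) / 2 ^ γ * ρ ^ γ := by
  have hρ : 0 < ρ := by linarith
  have ht0 : 0 ≤ r / ρ := div_nonneg hr.le hρ.le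
  have ht : r / ρ ≤ 1 / 2 := by
    rw [div_le_div_iff₀ hρ (by norm_num)]; linarith
  have H := aux_mono hγ ⟨ht0, by linarith⟩ ⟨by norm_num, by norm_num⟩ ht
  simp only at H
  rw [Real.div_rpow hr.le hρ.le, Real.div_rpow hr.le hρ.le,
    Real.div_rpow zero_le_one (by norm_num : (0:ℝ) ≤ 2),
    Real.div_rpow zero_le_one (by norm_num : (0:ℝ) ≤ 2),
    Real.one_rpow, Real.one_rpow] at H
  have hA : (0:ℝ) < ρ ^ γ := Real.rpow_pos_of_pos hρ γ
  have hA1 : (0:ℝ) < ρ ^ (γ - 1) := Real.rpow_pos_of_pos hρ (γ - 1)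
  have hP : (0:ℝ) < 2 ^ γ := Real.rpow_pos_of_pos two_pos γ
  have hP1 : (0:ℝ) < (2:ℝ) ^ (γ - 1) := Real.rpow_pos_of_pos two_pos (γ - 1)
  have eρ : ρ ^ (γ - 1) * ρ = ρ ^ γ := by
    rw [← Real.rpow_add_one hρ.ne' (γ - 1), show γ - 1 + 1 = γ by ring]
  have e2 : (2:ℝ) ^ (γ - 1) * 2 = 2 ^ γ := by
    rw [← Real.rpow_add_one (by norm_num : (2:ℝ) ≠ 0) (γ - 1), show γ - 1 + 1 = γ by ring]
  have A1 : ρ ^ γ * (γ * (r ^ (γ - 1) / ρ ^ (γ - 1)) - (γ - 1) * (r ^ γ / ρ ^ γ))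
      = γ * ρ * r ^ (γ - 1) - (γ - 1) * r ^ γ := by
    rw [← eρ]; field_simp
  have A2 : ρ ^ γ * (γ * (1 / 2 ^ (γ - 1)) - (γ - 1) * (1 / 2 ^ γ))
      = (γ + 1) / 2 ^ γ * ρ ^ γ := by
    rw [← e2]; field_simp; ring
  calc γ * ρ * r ^ (γ - 1) - (γ - 1) * r ^ γ
      = ρ ^ γ * (γ * (r ^ (γ - 1) / ρ ^ (γ - 1)) - (γ - 1) * (r ^ γ / ρ ^ γ)) := A1.symm
    _ ≤ ρ ^ γ * (γ * (1 / 2 ^ (γ - 1)) - (γ - 1) * (1 / 2 ^ γ)) :=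
        mul_le_mul_of_nonneg_left H hA.le
    _ = (γ + 1) / 2 ^ γ * ρ ^ γ := A2

/-- Coercivity estimate on the near side `ρ ≤ r/2`. -/
private lemma key_one {γ : ℝ} (hγ : 1 < γ) {r ρ : ℝ} (hr : 0 < r) (hρ0 : 0 ≤ ρ)
    (hρ : 2 * ρ ≤ r) :
    (1 / 2 ^ γ + γ / 2 - 1) * r ^ γ ≤ ρ ^ γ + (γ - 1) * r ^ γ - γ * r ^ (γ - 1) * ρ := by
  have hr2 : 0 < r / 2 := by linarith
  have g := grad_ineq hγ hρ0 hr2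
  have hP : (0:ℝ) < 2 ^ γ := Real.rpow_pos_of_pos two_pos γ
  have e1 : (r / 2) ^ γ = r ^ γ / 2 ^ γ := Real.div_rpow hr.le (by norm_num) γ
  have e4 : r ^ (γ - 1) * r = r ^ γ := by
    rw [← Real.rpow_add_one hr.ne' (γ - 1), show γ - 1 + 1 = γ by ring]
  have hYX : (r / 2) ^ (γ - 1) ≤ r ^ (γ - 1) :=
    Real.rpow_le_rpow (by linarith) (by linarith) (by linarith)
  have id1 : (r / 2) ^ γ + γ * r ^ (γ - 1) * (ρ - r / 2) + (γ - 1) * r ^ γ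
      - γ * r ^ (γ - 1) * ρ = (1 / 2 ^ γ + γ / 2 - 1) * r ^ γ := by
    linear_combination e1 - γ / 2 * e4
  have hmono : γ * r ^ (γ - 1) * (ρ - r / 2) ≤ γ * (r / 2) ^ (γ - 1) * (ρ - r / 2) := by
    have h := mul_le_mul_of_nonpos_right hYX (by linarith : ρ - r / 2 ≤ 0)
    nlinarith [h]
  linarith [g, id1, hmono]

private lemma two_rpow_gt {γ : ℝ} (hγ : 1 < γ) : γ + 1 < 2 ^ γ := by
  have hx : (γ - 1) * Real.log 2 ≠ 0 :=
    mul_ne_zero (by linarith) (ne_of_gt (Real.log_pos (by norm_num)))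
  have h1 := Real.add_one_lt_exp hx
  have hid : Real.exp ((γ - 1) * Real.log 2) = 2 ^ γ / 2 := by
    rw [show (γ - 1) * Real.log 2 = Real.log 2 * (γ - 1) by ring,
      ← Real.rpow_def_of_pos two_pos, Real.rpow_sub two_pos, Real.rpow_one]
  rw [hid] at h1
  have hlog : (0.6931471803 : ℝ) < Real.log 2 := Real.log_two_gt_d9
  have h3 : 0 < (γ - 1) * (Real.log 2 - 1/2) :=
    mul_pos (by linarith) (by linarith)
  nlinarith [h1, h3]

private lemma m_pos {γ : ℝ} (hγ : 1 < γ) : 0 < 1 / 2 ^ γ + γ / 2 - 1 := by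
  have h1 := Real.add_one_le_exp (-((γ - 1) * Real.log 2))
  have hid : Real.exp (-((γ - 1) * Real.log 2)) = 2 / 2 ^ γ := by
    rw [show -((γ - 1) * Real.log 2) = Real.log 2 * (1 - γ) by ring,
      ← Real.rpow_def_of_pos two_pos, Real.rpow_sub two_pos, Real.rpow_one]
  rw [hid] at h1
  have hlog : Real.log 2 < 0.6931471808 := Real.log_two_lt_d9
  have hP : (0:ℝ) < 2 ^ γ := Real.rpow_pos_of_pos two_pos γ
  have h2 : (1:ℝ) / 2 ^ γ = (2 / 2 ^ γ) / 2 := by ring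
  have h3 : 0 < (γ - 1) * (1 - Real.log 2) :=
    mul_pos (by linarith) (by linarith)
  linarith

set_option maxHeartbeats 1000000 in
/-- Coercivity of the relative entropy integrand on the residual set.
For `P(ρ) = (a/(γ-1)) ρ^γ` with `a > 0`, `γ > 1`, and `0 < b₁ ≤ b₂`, there is `C > 0`
(depending only on `a, γ, b₁, b₂`) such that for all `r ∈ [b₁, b₂]` and `ρ ≥ 0` with
`ρ ∉ [b₁/2, 2b₂]`: `(1/C)(1 + ρ^γ) ≤ P(ρ) − P(r) − P'(r)(ρ − r) ≤ C(1 + ρ^γ)`;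
in particular the middle quantity is positive. -/
theorem relative_entropy_coercivity_residual (a γ b₁ b₂ : ℝ)
    (ha : 0 < a) (hγ : 1 < γ) (hb₁ : 0 < b₁) (hb : b₁ ≤ b₂) :
    ∃ C > 0, ∀ r ∈ Set.Icc b₁ b₂, ∀ ρ : ℝ, 0 ≤ ρ → ρ ∉ Set.Icc (b₁ / 2) (2 * b₂) →
      ((1 / C) * (1 + ρ ^ γ)
          ≤ a / (γ - 1) * ρ ^ γ - a / (γ - 1) * r ^ γ - a * γ / (γ - 1) * r ^ (γ - 1) * (ρ - r)
        ∧ a / (γ - 1) * ρ ^ γ - a / (γ - 1) * r ^ γ - a * γ / (γ - 1) * r ^ (γ - 1) * (ρ - r)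
          ≤ C * (1 + ρ ^ γ))
        ∧ 0 < a / (γ - 1) * ρ ^ γ - a / (γ - 1) * r ^ γ
              - a * γ / (γ - 1) * r ^ (γ - 1) * (ρ - r) := by
  have hγ0 : 0 < γ - 1 := by linarith
  have hc : 0 < a / (γ - 1) := div_pos ha hγ0
  have hP : (0:ℝ) < 2 ^ γ := Real.rpow_pos_of_pos two_pos γ
  have hm := m_pos hγ
  have hδ : 0 < 1 - (γ + 1) / 2 ^ γ := by
    have := two_rpow_gt hγ
    rw [sub_pos, div_lt_one hP]; exact this
  have hb₂ : 0 < b₂ := lt_of_lt_of_le hb₁ hb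
  have hB1 : (0:ℝ) < (b₁ / 2) ^ γ := Real.rpow_pos_of_pos (by linarith) γ
  have hB2 : (0:ℝ) < (2 * b₂) ^ γ := Real.rpow_pos_of_pos (by linarith) γ
  have hb1γ : (0:ℝ) < b₁ ^ γ := Real.rpow_pos_of_pos hb₁ γ
  have hb2γ : (0:ℝ) < b₂ ^ γ := Real.rpow_pos_of_pos hb₂ γ
  obtain ⟨δ₁, hδ₁, hδ₁def⟩ :
      ∃ d : ℝ, 0 < d ∧
        d = a / (γ - 1) * b₁ ^ γ * (1 / 2 ^ γ + γ / 2 - 1) / (1 + (b₁ / 2) ^ γ) :=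
    ⟨_, div_pos (mul_pos (mul_pos hc hb1γ) hm) (by linarith), rfl⟩
  obtain ⟨δ₂, hδ₂, hδ₂def⟩ :
      ∃ d : ℝ, 0 < d ∧
        d = a / (γ - 1) * (1 - (γ + 1) / 2 ^ γ) * ((2 * b₂) ^ γ / (1 + (2 * b₂) ^ γ)) :=
    ⟨_, mul_pos (mul_pos hc hδ) (div_pos hB2 (by linarith)), rfl⟩
  have hC₂ : 0 < a / (γ - 1) * (1 + (γ - 1) * b₂ ^ γ) := by
    apply mul_pos hc; nlinarith
  obtain ⟨C, hCpos, hCmax, hC1', hC2'⟩ :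
      ∃ c : ℝ, 0 < c ∧ a / (γ - 1) * (1 + (γ - 1) * b₂ ^ γ) ≤ c ∧ 1 / δ₁ ≤ c ∧ 1 / δ₂ ≤ c :=
    ⟨max (a / (γ - 1) * (1 + (γ - 1) * b₂ ^ γ)) (max (1 / δ₁) (1 / δ₂)),
      lt_max_iff.mpr (Or.inl hC₂), le_max_left _ _,
      le_trans (le_max_left _ _) (le_max_right _ _),
      le_trans (le_max_right _ _) (le_max_right _ _)⟩
  refine ⟨C, hCpos, ?_⟩
  intro r hr ρ hρ0 hρnot
  obtain ⟨hr1, hr2⟩ := hr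
  have hr0 : 0 < r := lt_of_lt_of_le hb₁ hr1
  have hC1 : 1 / C ≤ δ₁ := by
    calc 1 / C ≤ 1 / (1 / δ₁) := one_div_le_one_div_of_le (by positivity) hC1'
      _ = δ₁ := one_div_one_div δ₁
  have hC2 : 1 / C ≤ δ₂ := by
    calc 1 / C ≤ 1 / (1 / δ₂) := one_div_le_one_div_of_le (by positivity) hC2'
      _ = δ₂ := one_div_one_div δ₂
  have e4 : r ^ (γ - 1) * r = r ^ γ := by
    rw [← Real.rpow_add_one hr0.ne' (γ - 1), show γ - 1 + 1 = γ by ring]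
  have hE : a / (γ - 1) * ρ ^ γ - a / (γ - 1) * r ^ γ - a * γ / (γ - 1) * r ^ (γ - 1) * (ρ - r)
      = a / (γ - 1) * (ρ ^ γ + (γ - 1) * r ^ γ - γ * r ^ (γ - 1) * ρ) := by
    field_simp
    linear_combination γ * e4
  have hAnn : 0 ≤ ρ ^ γ := Real.rpow_nonneg hρ0 γ
  have hX : 0 < r ^ (γ - 1) := Real.rpow_pos_of_pos hr0 (γ - 1)
  have hRγ : 0 < r ^ γ := Real.rpow_pos_of_pos hr0 γ
  -- upper bound
  have hRb : r ^ γ ≤ b₂ ^ γ := Real.rpow_le_rpow hr0.le hr2 (by linarith)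
  have hupper : a / (γ - 1) * ρ ^ γ - a / (γ - 1) * r ^ γ
      - a * γ / (γ - 1) * r ^ (γ - 1) * (ρ - r) ≤ C * (1 + ρ ^ γ) := by
    rw [hE]
    have h1 : a / (γ - 1) * (ρ ^ γ + (γ - 1) * r ^ γ - γ * r ^ (γ - 1) * ρ)
        ≤ a / (γ - 1) * (1 + (γ - 1) * b₂ ^ γ) * (1 + ρ ^ γ) := by
      nlinarith [mul_nonneg (mul_nonneg hc.le hγ0.le) (sub_nonneg.2 hRb),
        mul_nonneg (mul_nonneg hc.le (by linarith : (0:ℝ) ≤ γ))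
          (mul_nonneg hX.le hρ0),
        mul_nonneg (mul_nonneg (mul_nonneg hc.le hγ0.le) hb2γ.le) hAnn, hc.le]
    calc a / (γ - 1) * (ρ ^ γ + (γ - 1) * r ^ γ - γ * r ^ (γ - 1) * ρ)
        ≤ a / (γ - 1) * (1 + (γ - 1) * b₂ ^ γ) * (1 + ρ ^ γ) := h1
      _ ≤ C * (1 + ρ ^ γ) := mul_le_mul_of_nonneg_right hCmax (by linarith)
  -- lower bound
  have hlower : (1 / C) * (1 + ρ ^ γ) ≤ a / (γ - 1) * ρ ^ γ - a / (γ - 1) * r ^ γ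
      - a * γ / (γ - 1) * r ^ (γ - 1) * (ρ - r) := by
    rw [hE]
    rcases lt_or_ge ρ (b₁ / 2) with hcase | hcase
    · -- ρ < b₁/2 ≤ r/2
      have h2ρ : 2 * ρ ≤ r := by linarith
      have k := key_one hγ hr0 hρ0 h2ρ
      have hRb1 : b₁ ^ γ ≤ r ^ γ := Real.rpow_le_rpow hb₁.le hr1 (by linarith)
      have hAb : ρ ^ γ ≤ (b₁ / 2) ^ γ := Real.rpow_le_rpow hρ0 hcase.le (by linarith)
      have step1 : (1 / C) * (1 + ρ ^ γ) ≤ δ₁ * (1 + (b₁ / 2) ^ γ) := by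
        calc (1 / C) * (1 + ρ ^ γ) ≤ δ₁ * (1 + ρ ^ γ) :=
              mul_le_mul_of_nonneg_right hC1 (by linarith)
          _ ≤ δ₁ * (1 + (b₁ / 2) ^ γ) := mul_le_mul_of_nonneg_left (by linarith) hδ₁.le
      have step2 : δ₁ * (1 + (b₁ / 2) ^ γ)
          = a / (γ - 1) * b₁ ^ γ * (1 / 2 ^ γ + γ / 2 - 1) := by
        rw [hδ₁def, div_mul_cancel₀ _ (by linarith : (1:ℝ) + (b₁ / 2) ^ γ ≠ 0)]
      have step3 : a / (γ - 1) * b₁ ^ γ * (1 / 2 ^ γ + γ / 2 - 1)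
          ≤ a / (γ - 1) * ((1 / 2 ^ γ + γ / 2 - 1) * r ^ γ) := by
        have h := mul_le_mul_of_nonneg_left hRb1 (mul_nonneg hc.le hm.le)
        linarith [h]
      have step4 : a / (γ - 1) * ((1 / 2 ^ γ + γ / 2 - 1) * r ^ γ)
          ≤ a / (γ - 1) * (ρ ^ γ + (γ - 1) * r ^ γ - γ * r ^ (γ - 1) * ρ) :=
        mul_le_mul_of_nonneg_left k hc.le
      linarith
    · -- necessarily 2 b₂ < ρ
      have hcase2 : 2 * b₂ < ρ := by
        by_contra h
        push_neg at h
        exact hρnot ⟨hcase, h⟩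
      have h2r : 2 * r ≤ ρ := by linarith
      have k := key_two hγ hr0 h2r
      have hA2 : (2 * b₂) ^ γ ≤ ρ ^ γ := Real.rpow_le_rpow (by linarith) hcase2.le (by linarith)
      have hq : (2 * b₂) ^ γ / (1 + (2 * b₂) ^ γ) * (1 + ρ ^ γ) ≤ ρ ^ γ := by
        rw [div_mul_eq_mul_div, div_le_iff₀ (by linarith : (0:ℝ) < 1 + (2 * b₂) ^ γ)]
        nlinarith [hA2, hAnn, hB2]
      have step1 : δ₂ * (1 + ρ ^ γ)
          ≤ a / (γ - 1) * (1 - (γ + 1) / 2 ^ γ) * ρ ^ γ := by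
        rw [hδ₂def, mul_assoc]
        exact mul_le_mul_of_nonneg_left hq (mul_pos hc hδ).le
      have step2 : a / (γ - 1) * (1 - (γ + 1) / 2 ^ γ) * ρ ^ γ
          ≤ a / (γ - 1) * (ρ ^ γ + (γ - 1) * r ^ γ - γ * r ^ (γ - 1) * ρ) := by
        have h0 : (1 - (γ + 1) / 2 ^ γ) * ρ ^ γ
            ≤ ρ ^ γ + (γ - 1) * r ^ γ - γ * r ^ (γ - 1) * ρ := by linarith [k]
        calc a / (γ - 1) * (1 - (γ + 1) / 2 ^ γ) * ρ ^ γ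
            = a / (γ - 1) * ((1 - (γ + 1) / 2 ^ γ) * ρ ^ γ) := by ring
          _ ≤ _ := mul_le_mul_of_nonneg_left h0 hc.le
      have step0 : (1 / C) * (1 + ρ ^ γ) ≤ δ₂ * (1 + ρ ^ γ) :=
        mul_le_mul_of_nonneg_right hC2 (by linarith)
      linarith
  refine ⟨⟨hlower, hupper⟩, ?_⟩
  have hpos : 0 < (1 / C) * (1 + ρ ^ γ) := by positivity
  linarith
end

section
/- Let b : ℝ³ → ℝ be measurable with 0 < b₁ ≤ b ≤ b₂. For z ∈ L²(ℝ³; ℝ³), define the generalized Helmholtz projections Q_b[z] = b∇Φ, where Φ ∈ Ḣ¹(ℝ³) is the unique solution of div(b∇Φ) = div z, and P_b[z] = z − Q_b[z]. Then P_b[z] and Q_b[z] are orthogonal in the weighted Hilbert space L²_b with inner product ⟨f, g⟩ = ∫_{ℝ³} f·g·(1/b) dx; that is, ∫_{ℝ³} P_b[z]·Q_b[z]·(1/b) dx = 0. -/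
open MeasureTheory
open scoped RealInnerProductSpace

/-- orthogonality of the generalized Helmholtz projections in the weighted
space `L²_b` with weight `1/b`. Here `Q_b[z] = b∇Φ`, where `Φ` is the (weak) solution of
`div(b∇Φ) = div z`, expressed through the weak formulation tested against gradients, and
`P_b[z] = z − Q_b[z]`. Then `∫ P_b[z]·Q_b[z]·(1/b) dx = 0`. -/
theorem helmholtz_weighted_orthogonality (b₁ b₂ : ℝ) (hb₁ : 0 < b₁) (hb₁₂ : b₁ ≤ b₂)
    (b : EuclideanSpace ℝ (Fin 3) → ℝ) (hbmeas : Measurable b)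
    (hbbd : ∀ x, b x ∈ Set.Icc b₁ b₂)
    (z : EuclideanSpace ℝ (Fin 3) → EuclideanSpace ℝ (Fin 3))
    (hz : MemLp z 2 (volume : Measure (EuclideanSpace ℝ (Fin 3))))
    (Φ : EuclideanSpace ℝ (Fin 3) → ℝ) (hΦ : Differentiable ℝ Φ)
    -- weak formulation of `div(b∇Φ) = div z`, tested against gradients of admissible `ψ`:
    (hweak : ∀ ψ : EuclideanSpace ℝ (Fin 3) → ℝ, Differentiable ℝ ψ →
      Integrable (fun x => b x * ⟪gradient Φ x, gradient ψ x⟫) →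
      Integrable (fun x => ⟪z x, gradient ψ x⟫) →
      (∫ x, b x * ⟪gradient Φ x, gradient ψ x⟫) = ∫ x, ⟪z x, gradient ψ x⟫)
    (hint1 : Integrable (fun x => b x * ⟪gradient Φ x, gradient Φ x⟫))
    (hint2 : Integrable (fun x => ⟪z x, gradient Φ x⟫)) :
    (∫ x, ⟪z x - b x • gradient Φ x, b x • gradient Φ x⟫ * (1 / b x)) = 0 := by
  have key := hweak Φ hΦ hint1 hint2
  have hpt : ∀ x, ⟪z x - b x • gradient Φ x, b x • gradient Φ x⟫ * (1 / b x)
      = ⟪z x, gradient Φ x⟫ - b x * ⟪gradient Φ x, gradient Φ x⟫ := by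
    intro x
    have hb : b x ≠ 0 := ne_of_gt (lt_of_lt_of_le hb₁ (hbbd x).1)
    rw [inner_sub_left, real_inner_smul_right, real_inner_smul_left,
      real_inner_smul_right]
    field_simp
  calc (∫ x, ⟪z x - b x • gradient Φ x, b x • gradient Φ x⟫ * (1 / b x))
      = ∫ x, (⟪z x, gradient Φ x⟫ - b x * ⟪gradient Φ x, gradient Φ x⟫) := by
        exact integral_congr_ae (Filter.Eventually.of_forall hpt)
    _ = (∫ x, ⟪z x, gradient Φ x⟫) - ∫ x, b x * ⟪gradient Φ x, gradient Φ x⟫ :=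
        integral_sub hint2 hint1
    _ = 0 := by rw [key]; ring
end
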